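/- Let 0 → A → E →^β B → 0 be a non-abelian extension of associative conformal algebras with 2-cocycle (▶,◀,χ) determined by a section γ. A pair (g,h) ∈ Aut(A) × Aut(B) is inducible (i.e., there exists f ∈ Aut(E) with f(A) = A, f|_A = g and β∘f∘γ = h) if and only if there exists a k[∂]-module map ω: B → A such that for all a ∈ A, b, b₁, b₂ ∈ B: g(b ▶λ a) = h(b) ▶λ g(a) − ω(h(b)) λ g(a); g(a ◀λ b) = g(a) ◀λ h(b) − g(a) λ ω(h(b)); and g(χ_λ(b₁,b₂)) = χ_λ(h(b₁),h(b₂)) − h(b₁) ▶λ ω(h(b₂)) + ω(h(b₁) λ h(b₂)) − ω(h(b₁)) ◀λ h(b₂) + ω(h(b₁)) λ ω(h(b₂)). -/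

import Mathlib

/-!
A linear automorphism `f` of `A ⊕ B` with `f|_A = g` and `f̂ = h` is determined by its `B → A`
component, so it has the form `(a, b) ↦ (g a - ω (h b), h b)` for a unique linear `ω`. Since `g`
and `h` already respect `∂` and the λ-products of `A` and `B`, such an `f` respects `∂` iff `ω`
does, and respects the λ-product iff it does so on the pairs `(b, a)`, `(a, b)` and `(b₁, b₂)`;
these three cases are exactly the three identities.
-/


structure AssocConformalAlg (k : Type*) [Field k] (A : Type*) [AddCommGroup A] [Module k A] where
  D : A →ₗ[k] A
  mul : k → A →ₗ[k] A →ₗ[k] A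
  conf_left : ∀ (l : k) (a b : A), mul l (D a) b = -(l • mul l a b)
  conf_right : ∀ (l : k) (a b : A), mul l a (D b) = D (mul l a b) + l • mul l a b
  assoc : ∀ (l m : k) (a b c : A), mul (l + m) (mul l a b) c = mul l a (mul m b c)

structure IsNonAbel2Cocycle {k : Type*} [Field k] {A B : Type*}
    [AddCommGroup A] [Module k A] [AddCommGroup B] [Module k B]
    (SA : AssocConformalAlg k A) (SB : AssocConformalAlg k B)
    (lact : k → B →ₗ[k] A →ₗ[k] A) (ract : k → A →ₗ[k] B →ₗ[k] A)
    (chi : k → B →ₗ[k] B →ₗ[k] A) : Prop where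
  lact_DB : ∀ l b a, lact l (SB.D b) a = -(l • lact l b a)
  lact_DA : ∀ l b a, lact l b (SA.D a) = SA.D (lact l b a) + l • lact l b a
  ract_DA : ∀ l a b, ract l (SA.D a) b = -(l • ract l a b)
  ract_DB : ∀ l a b, ract l a (SB.D b) = SA.D (ract l a b) + l • ract l a b
  chi_DB1 : ∀ l b1 b2, chi l (SB.D b1) b2 = -(l • chi l b1 b2)
  chi_DB2 : ∀ l b1 b2, chi l b1 (SB.D b2) = SA.D (chi l b1 b2) + l • chi l b1 b2
  coh1 : ∀ l m b1 b2 a, lact l b1 (lact m b2 a)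
      = lact (l + m) (SB.mul l b1 b2) a + SA.mul (l + m) (chi l b1 b2) a
  coh2 : ∀ l m a b1 b2, ract (l + m) (ract l a b1) b2
      = ract l a (SB.mul m b1 b2) + SA.mul l a (chi m b1 b2)
  coh3 : ∀ l m b1 a b2, lact l b1 (ract m a b2) = ract (l + m) (lact l b1 a) b2
  coh4 : ∀ l m a1 a2 b, ract (l + m) (SA.mul l a1 a2) b = SA.mul l a1 (ract m a2 b)
  coh4' : ∀ l m b a1 a2, lact l b (SA.mul m a1 a2) = SA.mul (l + m) (lact l b a1) a2
  coh4'' : ∀ l m a1 b a2, SA.mul (l + m) (ract l a1 b) a2 = SA.mul l a1 (lact m b a2)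
  coh5 : ∀ l m b1 b2 b3, lact l b1 (chi m b2 b3) + chi (l + m) b1 (SB.mul m b2 b3)
      = chi (l + m) (SB.mul l b1 b2) b3 + ract (l + m) (chi l b1 b2) b3

/-- An automorphism of an associative conformal algebra: a `k[∂]`-module automorphism
preserving the λ-product. -/
def IsConfAut {k : Type*} [Field k] {E : Type*} [AddCommGroup E] [Module k E]
    (S : AssocConformalAlg k E) (f : E ≃ₗ[k] E) : Prop :=
  (∀ x, f (S.D x) = S.D (f x)) ∧ ∀ (l : k) (x y : E), f (S.mul l x y) = S.mul l (f x) (f y)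

section InducedEquiv

variable {R : Type*} [Ring R] {A A' B B' : Type*} [AddCommGroup A] [Module R A]
  [AddCommGroup A'] [Module R A'] [AddCommGroup B] [Module R B] [AddCommGroup B'] [Module R B']

/-- For `f ∈ Aut_A(E)` with `f|_A = g` and `f̂ = h`, the paper's `ω` is `b ↦ γ b - f (γ (h⁻¹ b))`. -/
def inducedEquiv (g : A ≃ₗ[R] A') (h : B ≃ₗ[R] B') (ω : B' →ₗ[R] A') : (A × B) ≃ₗ[R] (A' × B') where
  toFun p := (g p.1 - ω (h p.2), h p.2)
  invFun q := (g.symm (q.1 + ω q.2), h.symm q.2)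
  map_add' p q := by ext <;> simp only [Prod.fst_add, Prod.snd_add, map_add]; abel
  map_smul' c p := by ext <;> simp [smul_sub]
  left_inv p := by ext <;> simp
  right_inv q := by ext <;> simp

@[simp]
theorem inducedEquiv_apply (g : A ≃ₗ[R] A') (h : B ≃ₗ[R] B') (ω : B' →ₗ[R] A') (p : A × B) :
    inducedEquiv g h ω p = (g p.1 - ω (h p.2), h p.2) :=
  rfl

theorem exists_eq_inducedEquiv {g : A ≃ₗ[R] A'} {h : B ≃ₗ[R] B'} (f : (A × B) ≃ₗ[R] (A' × B'))
    (hA : ∀ a, f (a, 0) = (g a, 0)) (hB : ∀ b, (f (0, b)).2 = h b) :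
    ∃ ω : B' →ₗ[R] A', f = inducedEquiv g h ω := by
  refine ⟨-(LinearMap.fst R A' B' ∘ₗ f.toLinearMap ∘ₗ LinearMap.inr R A B ∘ₗ h.symm.toLinearMap), ?_⟩
  ext p <;>
  · have hsplit : f p = (g p.1, 0) + f (0, p.2) := by rw [← hA, ← map_add, Prod.mk_add_mk]; simp
    simp [hsplit, hB]

end InducedEquiv

section Extension

variable {k : Type*} [Field k] {A B : Type*} [AddCommGroup A] [Module k A] [AddCommGroup B]
  [Module k B] {SA : AssocConformalAlg k A} {SB : AssocConformalAlg k B}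
  {lact : k → B →ₗ[k] A →ₗ[k] A} {ract : k → A →ₗ[k] B →ₗ[k] A} {chi : k → B →ₗ[k] B →ₗ[k] A}
  {S : AssocConformalAlg k (A × B)} {g : A ≃ₗ[k] A} {h : B ≃ₗ[k] B} {ω : B →ₗ[k] A}

theorem isConfAut_inducedEquiv_iff (hSD : ∀ p : A × B, S.D p = (SA.D p.1, SB.D p.2))
    (hSm : ∀ (l : k) (p q : A × B),
      S.mul l p q = (SA.mul l p.1 q.1 + lact l p.2 q.1 + ract l p.1 q.2 + chi l p.2 q.2,
        SB.mul l p.2 q.2))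
    (hg : IsConfAut SA g) (hh : IsConfAut SB h) :
    IsConfAut S (inducedEquiv g h ω) ↔
      (∀ b, ω (SB.D b) = SA.D (ω b)) ∧
      (∀ (l : k) (b : B) (a : A),
        g (lact l b a) = lact l (h b) (g a) - SA.mul l (ω (h b)) (g a)) ∧
      (∀ (l : k) (a : A) (b : B),
        g (ract l a b) = ract l (g a) (h b) - SA.mul l (g a) (ω (h b))) ∧
      (∀ (l : k) (b1 b2 : B),
        g (chi l b1 b2)
          = chi l (h b1) (h b2) - lact l (h b1) (ω (h b2))
            + ω (SB.mul l (h b1) (h b2)) - ract l (ω (h b1)) (h b2)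
            + SA.mul l (ω (h b1)) (ω (h b2))) := by
  constructor
  · rintro ⟨hfD, hfm⟩
    refine ⟨fun b => ?_, fun l b a => ?_, fun l a b => ?_, fun l b1 b2 => ?_⟩
    · have := congrArg Prod.fst (hfD (0, h.symm b))
      simp only [hSD, inducedEquiv_apply, hh.1, map_zero, zero_sub, map_neg,
        LinearEquiv.apply_symm_apply] at this
      exact neg_injective this
    · have := congrArg Prod.fst (hfm l (0, b) (a, 0))
      simp only [hSm, inducedEquiv_apply, map_zero, map_neg, LinearMap.zero_apply,
        LinearMap.neg_apply, zero_add, add_zero, sub_zero, zero_sub] at this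
      rw [this]; abel
    · have := congrArg Prod.fst (hfm l (a, 0) (0, b))
      simp only [hSm, inducedEquiv_apply, map_zero, map_neg, LinearMap.zero_apply, zero_add,
        add_zero, sub_zero, zero_sub] at this
      rw [this]; abel
    · have := congrArg Prod.fst (hfm l (0, b1) (0, b2))
      simp only [hSm, inducedEquiv_apply, hh.2, map_zero, map_neg, LinearMap.zero_apply,
        LinearMap.neg_apply, zero_add, add_zero, zero_sub, neg_neg] at this
      rw [sub_eq_iff_eq_add] at this
      rw [this]; abel
  · rintro ⟨hωD, hlact, hract, hchi⟩
    refine ⟨fun p => ?_, fun l p q => ?_⟩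
    · ext <;> simp [hSD, hg.1, hh.1, hωD]
    ext
    · simp only [hSm, inducedEquiv_apply, map_add, map_sub, LinearMap.sub_apply, hg.2, hh.2,
        hlact, hract, hchi]
      abel
    · simp [hSm, hh.2]

end Extension

theorem stmt_16_general (k : Type*) [Field k]
    (A B : Type*) [AddCommGroup A] [Module k A] [AddCommGroup B] [Module k B]
    (SA : AssocConformalAlg k A) (SB : AssocConformalAlg k B)
    (lact : k → B →ₗ[k] A →ₗ[k] A) (ract : k → A →ₗ[k] B →ₗ[k] A)
    (chi : k → B →ₗ[k] B →ₗ[k] A)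
    (S : AssocConformalAlg k (A × B))
    (hSD : ∀ p : A × B, S.D p = (SA.D p.1, SB.D p.2))
    (hSm : ∀ (l : k) (p q : A × B),
      S.mul l p q = (SA.mul l p.1 q.1 + lact l p.2 q.1 + ract l p.1 q.2 + chi l p.2 q.2,
        SB.mul l p.2 q.2))
    (g : A ≃ₗ[k] A) (h : B ≃ₗ[k] B)
    (hg : IsConfAut SA g) (hh : IsConfAut SB h) :
    (∃ f : (A × B) ≃ₗ[k] (A × B), IsConfAut S f ∧
        (∀ a : A, f (a, (0 : B)) = (g a, (0 : B))) ∧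
        (∀ b : B, (f ((0 : A), b)).2 = h b)) ↔
    (∃ ω : B →ₗ[k] A, (∀ b, ω (SB.D b) = SA.D (ω b)) ∧
      (∀ (l : k) (b : B) (a : A),
        g (lact l b a) = lact l (h b) (g a) - SA.mul l (ω (h b)) (g a)) ∧
      (∀ (l : k) (a : A) (b : B),
        g (ract l a b) = ract l (g a) (h b) - SA.mul l (g a) (ω (h b))) ∧
      (∀ (l : k) (b1 b2 : B),
        g (chi l b1 b2)
          = chi l (h b1) (h b2) - lact l (h b1) (ω (h b2))
            + ω (SB.mul l (h b1) (h b2)) - ract l (ω (h b1)) (h b2)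
            + SA.mul l (ω (h b1)) (ω (h b2)))) := by
  constructor
  · rintro ⟨f, hf, hfA, hfB⟩
    obtain ⟨ω, rfl⟩ := exists_eq_inducedEquiv f hfA hfB
    exact ⟨ω, (isConfAut_inducedEquiv_iff hSD hSm hg hh).mp hf⟩
  · rintro ⟨ω, hω⟩
    exact ⟨inducedEquiv g h ω, (isConfAut_inducedEquiv_iff hSD hSm hg hh).mpr hω,
      fun a => by simp, fun b => by simp⟩

/-- Inducibility criterion: `(g,h)` is inducible iff there is `ω : B → A` (a
`k[∂]`-module map) satisfying the three compatibility equations. -/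
theorem stmt_16 (k : Type*) [Field k] [IsAlgClosed k] [CharZero k]
    (A B : Type*) [AddCommGroup A] [Module k A] [AddCommGroup B] [Module k B]
    (SA : AssocConformalAlg k A) (SB : AssocConformalAlg k B)
    (lact : k → B →ₗ[k] A →ₗ[k] A) (ract : k → A →ₗ[k] B →ₗ[k] A)
    (chi : k → B →ₗ[k] B →ₗ[k] A)
    (hc : IsNonAbel2Cocycle SA SB lact ract chi)
    (S : AssocConformalAlg k (A × B))
    (hSD : ∀ p : A × B, S.D p = (SA.D p.1, SB.D p.2))
    (hSm : ∀ (l : k) (p q : A × B),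
      S.mul l p q = (SA.mul l p.1 q.1 + lact l p.2 q.1 + ract l p.1 q.2 + chi l p.2 q.2,
        SB.mul l p.2 q.2))
    (g : A ≃ₗ[k] A) (h : B ≃ₗ[k] B)
    (hg : IsConfAut SA g) (hh : IsConfAut SB h) :
    (∃ f : (A × B) ≃ₗ[k] (A × B), IsConfAut S f ∧
        (∀ a : A, f (a, (0 : B)) = (g a, (0 : B))) ∧
        (∀ b : B, (f ((0 : A), b)).2 = h b)) ↔
    (∃ ω : B →ₗ[k] A, (∀ b, ω (SB.D b) = SA.D (ω b)) ∧
      (∀ (l : k) (b : B) (a : A),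
        g (lact l b a) = lact l (h b) (g a) - SA.mul l (ω (h b)) (g a)) ∧
      (∀ (l : k) (a : A) (b : B),
        g (ract l a b) = ract l (g a) (h b) - SA.mul l (g a) (ω (h b))) ∧
      (∀ (l : k) (b1 b2 : B),
        g (chi l b1 b2)
          = chi l (h b1) (h b2) - lact l (h b1) (ω (h b2))
            + ω (SB.mul l (h b1) (h b2)) - ract l (ω (h b1)) (h b2)
            + SA.mul l (ω (h b1)) (ω (h b2)))) :=
  stmt_16_general k A B SA SB lact ract chi S hSD hSm g h hg hh
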